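/- Reliability of the DT-LTT selection rule: let λ_1,...,λ_m be a fixed sequence of hyperparameters with true expected losses L(λ_j) ∈ [0,1] and empirical losses \hat{L}(λ_j) computed from n i.i.d. samples in [0,1] (\hat{L}(λ_j) has mean L(λ_j)). Define j^stop as the first index j with \hat{L}(λ_j) > ψ(α,δ) = α − sqrt(−ln(δ)/(2n)) (or m if none), and suppose \hat{L}(λ_1) ≤ ψ(α,δ), and let λ* be any λ_{j*} with j* ≤ j^stop chosen so that \hat{L}(λ_{j*}) ≤ ψ(α,δ). Then Pr[L(λ*) ≤ α] ≥ 1 − δ. -/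

import Mathlib

/-!
Fixed-sequence testing needs no multiplicity correction. Let `j₀` be the first index with
`L j₀ > α`; it is determined by `L` alone, not by the data. If the selection is wrong then
`j₀ ≤ j*`, so `j₀` was accepted: `L̂ j₀ ≤ α - u < L j₀ - u` with `u = √(-log δ / (2n))`.
By Hoeffding's inequality this single event has probability at most `exp (-2 n u²) = δ`.
-/

open MeasureTheory ProbabilityTheory Real

section Hoeffding

variable {Ω ι : Type*} [MeasurableSpace Ω] {μ : Measure Ω} [IsProbabilityMeasure μ] [Fintype ι]
  {X : ι → Ω → ℝ} {p : ℝ}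

lemma measureReal_sum_le_card_mul_sub_le (h_indep : iIndepFun X μ)
    (hmeas : ∀ i, AEMeasurable (X i) μ) (hb : ∀ i, ∀ᵐ ω ∂μ, X i ω ∈ Set.Icc (0 : ℝ) 1)
    (hmean : ∀ i, μ[X i] = p) {u : ℝ} (hu : 0 ≤ u) :
    μ.real {ω | ∑ i, X i ω ≤ Fintype.card ι * (p - u)} ≤ exp (-2 * Fintype.card ι * u ^ 2) := by
  -- Hoeffding's lemma: each centred `[0, 1]`-valued variable has variance proxy `1 / 4`.
  have h_subG (i : ι) (_ : i ∈ Finset.univ) :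
      HasSubgaussianMGF (fun ω ↦ p - X i ω) (1 / 4) μ := by
    have h := (hasSubgaussianMGF_of_mem_Icc (hmeas i) (hb i)).neg
    convert h using 1
    · ext ω; simp [hmean i]
    · ext; norm_num
  have h_indep' : iIndepFun (fun i ω ↦ p - X i ω) μ :=
    h_indep.comp (fun _ x ↦ p - x) fun _ ↦ by fun_prop
  have h := HasSubgaussianMGF.measure_sum_ge_le_of_iIndepFun h_indep' h_subG
    (ε := Fintype.card ι * u) (by positivity)
  convert h using 2
  · ext ω
    simp only [Set.mem_ofPred_eq, Finset.sum_sub_distrib, Finset.sum_const, Finset.card_univ,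
      nsmul_eq_mul]
    constructor <;> intro <;> linarith
  · simp only [Finset.sum_const, Finset.card_univ, nsmul_eq_mul]
    push_cast
    field_simp
    ring

lemma measureReal_mean_le_sub_sqrt_log_le [Nonempty ι] (h_indep : iIndepFun X μ)
    (hmeas : ∀ i, AEMeasurable (X i) μ) (hb : ∀ i, ∀ᵐ ω ∂μ, X i ω ∈ Set.Icc (0 : ℝ) 1)
    (hmean : ∀ i, μ[X i] = p) {δ : ℝ} (hδ : 0 < δ) :
    μ.real {ω | (∑ i, X i ω) / Fintype.card ι ≤
      p - √(-log δ / (2 * Fintype.card ι))} ≤ δ := by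
  set n : ℝ := (Fintype.card ι : ℝ)
  set u := √(-log δ / (2 * n))
  have hn : 0 < n := by positivity
  have hexp : -2 * n * u ^ 2 ≤ log δ := by
    have : -log δ / (2 * n) ≤ u ^ 2 := by rw [sq_sqrt']; exact le_max_left _ _
    rw [div_le_iff₀ (by positivity)] at this
    linarith
  calc μ.real {ω | (∑ i, X i ω) / n ≤ p - u}
      = μ.real {ω | ∑ i, X i ω ≤ n * (p - u)} := by simp_rw [div_le_iff₀' hn]
    _ ≤ exp (-2 * n * u ^ 2) :=
      measureReal_sum_le_card_mul_sub_le h_indep hmeas hb hmean (by positivity)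
    _ ≤ δ := by rw [← exp_log hδ]; exact exp_le_exp.mpr hexp

end Hoeffding

lemma exists_bad_and_bad_sel_subset_accept {ι α : Type*} [LinearOrder ι] [WellFoundedLT ι]
    {bad : ι → Prop} (h : ∃ j, bad j) {accept : ι → α → Prop} {sel : α → ι}
    (hsel : ∀ x, ∀ j ≤ sel x, accept j x) :
    ∃ j₀, bad j₀ ∧ {x | bad (sel x)} ⊆ {x | accept j₀ x} := by
  obtain ⟨j₀, hj₀, hmin⟩ := wellFounded_lt.has_min {j | bad j} h
  exact ⟨j₀, hj₀, fun x hx ↦ hsel x j₀ (not_lt.mp (hmin _ hx))⟩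

theorem dt_ltt_reliability_general
    {Ω : Type*} [MeasurableSpace Ω] (μ : Measure Ω) [IsProbabilityMeasure μ]
    (m n : ℕ) (hn : 0 < n)
    (ℓ : Fin m → Fin n → Ω → ℝ)
    (hmeas : ∀ j i, Measurable (ℓ j i))
    (hbound : ∀ j i ω, ℓ j i ω ∈ Set.Icc (0 : ℝ) 1)
    -- the per-sample loss vectors are i.i.d. across the `n` calibration samples
    (hindep : iIndepFun
      (fun (i : Fin n) (ω : Ω) (j : Fin m) => ℓ j i ω) μ)
    (L : Fin m → ℝ)
    (hmean : ∀ j i, (∫ ω, ℓ j i ω ∂μ) = L j)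
    (α δ : ℝ) (hδ : δ ∈ Set.Ioo (0 : ℝ) 1)
    (Lhat : Fin m → Ω → ℝ)
    (hLhat : ∀ j ω, Lhat j ω = (∑ i, ℓ j i ω) / n)
    (ψ : ℝ) (hψ : ψ = α - Real.sqrt (-Real.log δ / (2 * n)))
    (jstar : Ω → Fin m)
    -- the selected candidate is accepted
    (hacc : ∀ ω, Lhat (jstar ω) ω ≤ ψ)
    -- the selected index does not exceed the stopping index: all earlier candidates accepted
    (hbefore : ∀ ω, ∀ j : Fin m, j < jstar ω → Lhat j ω ≤ ψ) :
    1 - δ ≤ (μ {ω | L (jstar ω) ≤ α}).toReal := by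
  have h_accepted (ω : Ω) : ∀ j ≤ jstar ω, Lhat j ω ≤ ψ := fun j hj ↦
    hj.lt_or_eq.elim (hbefore ω j) fun h ↦ h ▸ hacc ω
  have h_error : μ.real {ω | α < L (jstar ω)} ≤ δ := by
    by_cases h_bad : ∃ j, α < L j
    · obtain ⟨j₀, hj₀, h_sub⟩ := exists_bad_and_bad_sel_subset_accept h_bad h_accepted
      have : Nonempty (Fin n) := ⟨⟨0, hn⟩⟩
      calc μ.real {ω | α < L (jstar ω)}
          ≤ μ.real {ω | (∑ i, ℓ j₀ i ω) / Fintype.card (Fin n) ≤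
              L j₀ - √(-log δ / (2 * Fintype.card (Fin n)))} := by
            refine measureReal_mono (h_sub.trans fun ω hω ↦ ?_)
            simp only [Set.mem_ofPred_eq, hLhat, hψ, Fintype.card_fin] at hω ⊢
            linarith
        _ ≤ δ := measureReal_mean_le_sub_sqrt_log_le
            (hindep.comp (fun _ v ↦ v j₀) fun _ ↦ measurable_pi_apply j₀)
            (fun i ↦ (hmeas j₀ i).aemeasurable) (fun i ↦ ae_of_all _ (hbound j₀ i))
            (hmean j₀) hδ.1
    · simp only [not_exists, not_lt] at h_bad
      simp [fun ω ↦ not_lt.mpr (h_bad (jstar ω)), hδ.1.le]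
  have h_cover := measureReal_union_le (μ := μ) {ω | L (jstar ω) ≤ α} {ω | α < L (jstar ω)}
  rw [← Set.ofPred_or] at h_cover
  simp only [le_or_gt, Set.ofPred_true, probReal_univ] at h_cover
  exact (by linarith : 1 - δ ≤ μ.real {ω | L (jstar ω) ≤ α})

/-- Reliability of the DT-LTT selection rule (Theorem 1 of the paper): for a fixed sequence of
candidate hyperparameters with per-sample losses i.i.d. across calibration samples, if the
selected index `jstar ω` is accepted (empirical loss at most `ψ(α,δ)`) and every earlier index
in the tested sequence is also accepted, then the true expected loss of the selection is at most
`α` with probability at least `1 - δ`. -/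
theorem dt_ltt_reliability
    {Ω : Type*} [MeasurableSpace Ω] (μ : Measure Ω) [IsProbabilityMeasure μ]
    (m n : ℕ) (hm : 0 < m) (hn : 0 < n)
    (ℓ : Fin m → Fin n → Ω → ℝ)
    (hmeas : ∀ j i, Measurable (ℓ j i))
    (hbound : ∀ j i ω, ℓ j i ω ∈ Set.Icc (0 : ℝ) 1)
    -- the per-sample loss vectors are i.i.d. across the `n` calibration samples
    (hindep : iIndepFun
      (fun (i : Fin n) (ω : Ω) (j : Fin m) => ℓ j i ω) μ)
    (hid : ∀ i : Fin n,
      Measure.map (fun (ω : Ω) (j : Fin m) => ℓ j i ω) μ =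
        Measure.map (fun (ω : Ω) (j : Fin m) => ℓ j ⟨0, hn⟩ ω) μ)
    (L : Fin m → ℝ) (hL : ∀ j, L j ∈ Set.Icc (0 : ℝ) 1)
    (hmean : ∀ j i, (∫ ω, ℓ j i ω ∂μ) = L j)
    (α δ : ℝ) (hα : α ∈ Set.Icc (0 : ℝ) 1) (hδ : δ ∈ Set.Ioo (0 : ℝ) 1)
    (Lhat : Fin m → Ω → ℝ)
    (hLhat : ∀ j ω, Lhat j ω = (∑ i, ℓ j i ω) / n)
    (ψ : ℝ) (hψ : ψ = α - Real.sqrt (-Real.log δ / (2 * n)))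
    (jstar : Ω → Fin m)
    -- the first candidate is accepted
    (hfirst : ∀ ω, Lhat ⟨0, hm⟩ ω ≤ ψ)
    -- the selected candidate is accepted
    (hacc : ∀ ω, Lhat (jstar ω) ω ≤ ψ)
    -- the selected index does not exceed the stopping index: all earlier candidates accepted
    (hbefore : ∀ ω, ∀ j : Fin m, j < jstar ω → Lhat j ω ≤ ψ) :
    1 - δ ≤ (μ {ω | L (jstar ω) ≤ α}).toReal :=
  dt_ltt_reliability_general μ m n hn ℓ hmeas hbound hindep L hmean α δ hδ Lhat hLhat ψ hψ jstar
    hacc hbefore
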